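/- Let v(t,x) := (1/√(4πt)) ∫₀^∞ (e^{−(x−y)²/(4t)} − e^{−(x+y)²/(4t)}) v₀(y) dy for t > 0, x > 0, where v₀(x) = 1 for 0 < x ≤ 1 and v₀(x) = 1/x² for x > 1. Then v(t, 2√t) / ((ln t)/(2t)) → e^{−1}/√π as t → +∞; that is, v(t, 2√t) ∼ (e^{−1}/√π)·(ln t)/(2t) as t → +∞. -/

import Mathlib

/-!
At `x = 2√t` the kernel is `g (y / (2√t))` with `g s = exp (-(1 - s)²) - exp (-(1 + s)²)`
(`kernelProfile`).
Since `g s ≤ 4 s`, the part `y ≤ 1` of the integral is `O(1/√t)`. On `y > 1` the substitution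
`s = y / (2√t)` turns `∫ g (y / (2√t)) / y²` into `(2√t)⁻¹ ∫_{1/(2√t)}^∞ g s / s² ds`, and since
`g s = 4 e⁻¹ s + O(s²)` near `0` while `g` is bounded, that integral is
`4 e⁻¹ log (2√t) + O(1) = 2 e⁻¹ log t + O(1)`.
Hence `4√π t · v(t, 2√t) = 2 e⁻¹ log t + O(1)`.
-/

open Real Filter MeasureTheory Set

noncomputable section

/-- The initial datum `v₀(x) = 1` for `0 < x ≤ 1`, `v₀(x) = 1/x²` for `x > 1`. -/
def v₀ (x : ℝ) : ℝ := if x ≤ 1 then 1 else 1 / x ^ 2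

/-- The solution of the Dirichlet heat equation on the half-line with initial datum `v₀`. -/
def vheat (t x : ℝ) : ℝ :=
  (Real.sqrt (4 * Real.pi * t))⁻¹ *
    ∫ y in Set.Ioi (0 : ℝ),
      (Real.exp (-(x - y) ^ 2 / (4 * t)) - Real.exp (-(x + y) ^ 2 / (4 * t))) * v₀ y

theorem Real.exp_le_quadratic_of_nonpos {x : ℝ} (hx : x ≤ 0) : exp x ≤ 1 + x + x ^ 2 / 2 := by
  have h := quadratic_le_exp_of_nonneg (neg_nonneg.2 hx)
  rw [exp_neg] at h
  have hpos := exp_pos x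
  have hmul : exp x * (1 + -x + (-x) ^ 2 / 2) ≤ 1 := by
    simpa [mul_inv_cancel₀ hpos.ne'] using mul_le_mul_of_nonneg_left h hpos.le
  -- `(1 + x + x²/2)(1 - x + x²/2) = 1 + x⁴/4 ≥ 1`
  nlinarith [sq_nonneg (x ^ 2), sq_nonneg (x + 1)]

def kernelProfile (s : ℝ) : ℝ := exp (-(1 - s) ^ 2) - exp (-(1 + s) ^ 2)

theorem continuous_kernelProfile : Continuous kernelProfile := by
  unfold kernelProfile; fun_prop

theorem exp_sub_exp_eq_kernelProfile {x : ℝ} (hx : x ≠ 0) (y : ℝ) :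
    exp (-(x - y) ^ 2 / x ^ 2) - exp (-(x + y) ^ 2 / x ^ 2) = kernelProfile (y / x) := by
  rw [kernelProfile, one_sub_div hx, one_add_div hx, div_pow, div_pow, neg_div, neg_div]

theorem kernelProfile_nonneg {s : ℝ} (hs : 0 ≤ s) : 0 ≤ kernelProfile s :=
  sub_nonneg.2 (exp_le_exp.2 (by nlinarith))

theorem abs_kernelProfile_le_one (s : ℝ) : |kernelProfile s| ≤ 1 := by
  have h₁ : exp (-(1 - s) ^ 2) ≤ 1 := exp_le_one_iff.2 (by nlinarith)
  have h₂ : exp (-(1 + s) ^ 2) ≤ 1 := exp_le_one_iff.2 (by nlinarith)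
  rw [kernelProfile, abs_le]
  constructor <;> linarith [exp_pos (-(1 - s) ^ 2), exp_pos (-(1 + s) ^ 2)]

theorem kernelProfile_le {s : ℝ} (hs : 0 ≤ s) : kernelProfile s ≤ 4 * s := by
  have hfactor : kernelProfile s = exp (-(1 - s) ^ 2) * (1 - exp (-(4 * s))) := by
    rw [kernelProfile, mul_sub, mul_one, ← exp_add]; ring_nf
  have h₁ : exp (-(1 - s) ^ 2) ≤ 1 := exp_le_one_iff.2 (by nlinarith)
  have h₂ : 0 ≤ 1 - exp (-(4 * s)) := sub_nonneg.2 (exp_le_one_iff.2 (by linarith))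
  rw [hfactor]
  nlinarith [one_sub_le_exp_neg (4 * s)]

theorem abs_kernelProfile_sub_le {s : ℝ} (hs₀ : 0 ≤ s) (hs₁ : s ≤ 1) :
    |kernelProfile s - 4 * exp (-1) * s| ≤ 5 * s ^ 2 := by
  -- with `u = 2s - s²` and `w = -2s - s²` we have `u - w = 4s` and
  -- `kernelProfile s = e⁻¹ (eᵘ - eʷ)`, so the error is `e⁻¹` times a difference of two
  -- second-order Taylor remainders of `exp`
  set u := 2 * s - s ^ 2 with hu_def
  set w := -2 * s - s ^ 2 with hw_def
  have hprofile : kernelProfile s - 4 * exp (-1) * s =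
      exp (-1) * ((exp u - 1 - u) - (exp w - 1 - w)) := by
    rw [kernelProfile, show -(1 - s) ^ 2 = -1 + u by ring, show -(1 + s) ^ 2 = -1 + w by ring,
      exp_add, exp_add]
    ring
  have hu : |exp u - 1 - u| ≤ u ^ 2 := abs_exp_sub_one_sub_id_le (by
    rw [abs_le]; constructor <;> nlinarith)
  have hw : exp w - 1 - w ≤ w ^ 2 / 2 := by
    linarith [exp_le_quadratic_of_nonpos (show w ≤ 0 by nlinarith)]
  have hu₀ : 0 ≤ exp u - 1 - u := by linarith [add_one_le_exp u]
  have hw₀ : 0 ≤ exp w - 1 - w := by linarith [add_one_le_exp w]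
  have hu₂ : u ^ 2 ≤ 4 * s ^ 2 := by
    rw [hu_def]; nlinarith [mul_nonneg (pow_nonneg hs₀ 3) (by linarith : (0 : ℝ) ≤ 4 - s)]
  have hw₂ : w ^ 2 / 2 ≤ 5 * s ^ 2 := by
    rw [hw_def]
    nlinarith [mul_nonneg (pow_nonneg hs₀ 2) (by nlinarith : (0 : ℝ) ≤ 6 - 4 * s - s ^ 2)]
  have he : exp (-1) ≤ 1 := exp_le_one_iff.2 (by norm_num)
  rw [hprofile, abs_mul, abs_of_pos (exp_pos _)]
  refine (mul_le_of_le_one_left (abs_nonneg _) he).trans ?_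
  rw [abs_le]; constructor <;> nlinarith [abs_le.1 hu]

theorem Real.rpow_neg_two {s : ℝ} (hs : 0 ≤ s) : s ^ (-2 : ℝ) = (s ^ 2)⁻¹ := by
  rw [rpow_neg hs, rpow_two]

theorem integrableOn_Ioi_inv_sq {c : ℝ} (hc : 0 < c) :
    IntegrableOn (fun s : ℝ => (s ^ 2)⁻¹) (Ioi c) :=
  (integrableOn_Ioi_rpow_of_lt (by norm_num : (-2 : ℝ) < -1) hc).congr_fun
    (fun s hs => rpow_neg_two (hc.trans hs).le) measurableSet_Ioi

theorem integral_Ioi_inv_sq {c : ℝ} (hc : 0 < c) : ∫ s in Ioi c, (s ^ 2)⁻¹ = c⁻¹ := calc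
  ∫ s in Ioi c, (s ^ 2)⁻¹ = ∫ s in Ioi c, s ^ (-2 : ℝ) :=
    setIntegral_congr_fun measurableSet_Ioi fun s hs => (rpow_neg_two (hc.trans hs).le).symm
  _ = c⁻¹ := by
    rw [integral_Ioi_rpow_of_lt (by norm_num) hc]; norm_num [rpow_neg_one]

theorem abs_integral_Ioi_div_sq_add_mul_log_le {f : ℝ → ℝ} (hf : Continuous f) {c K M ε : ℝ}
    (hK : ∀ s ∈ Ioc 0 1, |f s - c * s| ≤ K * s ^ 2) (hM : ∀ s, 1 < s → |f s| ≤ M)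
    (hε₀ : 0 < ε) (hε₁ : ε ≤ 1) :
    |(∫ s in Ioi ε, f s / s ^ 2) + c * log ε| ≤ K + M := by
  have hcont : ContinuousOn (fun s => f s / s ^ 2) (uIcc ε 1) :=
    hf.continuousOn.div (continuousOn_pow 2) fun s hs =>
      pow_ne_zero 2 (hε₀.trans_le (uIcc_of_le hε₁ ▸ hs).1).ne'
  have hbound : ∀ s ∈ Ioi (1 : ℝ), ‖f s / s ^ 2‖ ≤ M * (s ^ 2)⁻¹ := fun s hs => by
    rw [norm_div, norm_pow, Real.norm_eq_abs, Real.norm_eq_abs,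
      abs_of_pos (a := s) (zero_lt_one.trans hs), div_eq_mul_inv]
    exact mul_le_mul_of_nonneg_right (hM s hs) (by positivity)
  have htail : IntegrableOn (fun s => f s / s ^ 2) (Ioi 1) :=
    ((integrableOn_Ioi_inv_sq one_pos).const_mul M).mono'
      (hf.measurable.div (by fun_prop)).aestronglyMeasurable
      ((ae_restrict_iff' measurableSet_Ioi).2 (Eventually.of_forall hbound))
  have htail_le : |∫ s in Ioi 1, f s / s ^ 2| ≤ M := by
    have := norm_integral_le_of_norm_le ((integrableOn_Ioi_inv_sq one_pos).const_mul M)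
      ((ae_restrict_iff' measurableSet_Ioi).2 (Eventually.of_forall hbound))
    rwa [integral_const_mul, integral_Ioi_inv_sq one_pos, inv_one, mul_one] at this
  have hK₀ : 0 ≤ K := by simpa using (abs_nonneg _).trans (hK 1 ⟨one_pos, le_rfl⟩)
  have hinv : IntervalIntegrable (fun s : ℝ => c * s⁻¹) volume ε 1 :=
    (continuousOn_const.mul (continuousOn_inv₀.mono fun s hs =>
      (hε₀.trans_le (uIcc_of_le hε₁ ▸ hs).1).ne')).intervalIntegrable
  have hmain : |(∫ s in ε..1, f s / s ^ 2) + c * log ε| ≤ K := by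
    have hlog : ∫ s in ε..1, c * s⁻¹ = -(c * log ε) := by
      rw [intervalIntegral.integral_const_mul, integral_inv_of_pos hε₀ one_pos, one_div, log_inv,
        mul_neg]
    have hrem : ∀ s ∈ uIoc ε 1, ‖f s / s ^ 2 - c * s⁻¹‖ ≤ K := fun s hs => by
      rw [uIoc_of_le hε₁] at hs
      have hs₀ : 0 < s := hε₀.trans hs.1
      rw [show f s / s ^ 2 - c * s⁻¹ = (f s - c * s) / s ^ 2 by field_simp, norm_div,
        Real.norm_eq_abs, norm_pow, Real.norm_eq_abs, abs_of_pos hs₀, div_le_iff₀ (by positivity)]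
      exact hK s ⟨hs₀, hs.2⟩
    have := intervalIntegral.norm_integral_le_of_norm_le_const hrem
    rw [intervalIntegral.integral_sub hcont.intervalIntegrable hinv, hlog, sub_neg_eq_add,
      Real.norm_eq_abs, abs_of_nonneg (sub_nonneg.2 hε₁)] at this
    exact this.trans (mul_le_of_le_one_right hK₀ (by linarith))
  rw [← intervalIntegral.integral_interval_add_Ioi' hcont.intervalIntegrable htail]
  calc _ = |((∫ s in ε..1, f s / s ^ 2) + c * log ε) + ∫ s in Ioi 1, f s / s ^ 2| := by ring_nf
    _ ≤ K + M := (abs_add_le _ _).trans (add_le_add hmain htail_le)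

theorem integral_Ioi_one_comp_mul_div_sq (f : ℝ → ℝ) {c : ℝ} (hc : 0 < c) :
    ∫ y in Ioi 1, f (c * y) / y ^ 2 = c * ∫ s in Ioi c, f s / s ^ 2 := by
  have hscale : ∀ y, f (c * y) / y ^ 2 = c ^ 2 * (f (c * y) / (c * y) ^ 2) := fun y => by
    rcases eq_or_ne y 0 with rfl | hy
    · simp
    · field_simp
  simp_rw [hscale, integral_const_mul, integral_comp_mul_left_Ioi (fun s => f s / s ^ 2) 1 hc,
    mul_one, smul_eq_mul]
  field_simp

theorem v₀_of_le_one {y : ℝ} (hy : y ≤ 1) : v₀ y = 1 := if_pos hy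

theorem v₀_of_one_lt {y : ℝ} (hy : 1 < y) : v₀ y = (y ^ 2)⁻¹ := by
  rw [v₀, if_neg hy.not_ge, one_div]

theorem integrableOn_v₀ : IntegrableOn v₀ (Ioi 0) := by
  rw [← Ioc_union_Ioi_eq_Ioi zero_le_one]
  exact (integrableOn_const (by simp)).congr_fun (fun y hy => (v₀_of_le_one hy.2).symm)
      measurableSet_Ioc |>.union <| (integrableOn_Ioi_inv_sq one_pos).congr_fun
      (fun y hy => (v₀_of_one_lt hy).symm) measurableSet_Ioi

theorem vheat_eq {t x : ℝ} (hx : 0 < x) (ht : 4 * t = x ^ 2) :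
    vheat t x = (√π * x)⁻¹ * ((∫ y in Ioc 0 1, kernelProfile (y / x)) +
      x⁻¹ * ∫ s in Ioi x⁻¹, kernelProfile s / s ^ 2) := by
  have hsqrt : √(4 * π * t) = √π * x := by
    rw [mul_comm 4 π, mul_assoc, ht, sqrt_mul pi_pos.le, sqrt_sq hx.le]
  have hint : IntegrableOn (fun y => kernelProfile (x⁻¹ * y) * v₀ y) (Ioi 0) :=
    integrableOn_v₀.bdd_mul
      (continuous_kernelProfile.comp (continuous_const_mul _)).aestronglyMeasurable
      (Eventually.of_forall fun y => abs_kernelProfile_le_one _)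
  have hsplit := setIntegral_union (Ioc_disjoint_Ioi_same (a := (0 : ℝ)) (b := 1)) measurableSet_Ioi
    (hint.mono_set Ioc_subset_Ioi_self) (hint.mono_set (Ioi_subset_Ioi zero_le_one))
  rw [Ioc_union_Ioi_eq_Ioi zero_le_one] at hsplit
  simp_rw [vheat, hsqrt, ht, exp_sub_exp_eq_kernelProfile hx.ne', div_eq_inv_mul _ x, hsplit,
    ← integral_Ioi_one_comp_mul_div_sq kernelProfile (inv_pos.2 hx)]
  congr 2
  · exact setIntegral_congr_fun measurableSet_Ioc fun y hy => by rw [v₀_of_le_one hy.2, mul_one]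
  · exact setIntegral_congr_fun measurableSet_Ioi fun y hy => by
      rw [v₀_of_one_lt hy, div_eq_mul_inv]

theorem abs_integral_kernelProfile_div_le {x : ℝ} (hx : 0 < x) :
    |∫ y in Ioc 0 1, kernelProfile (y / x)| ≤ 4 / x := by
  have hle : ∀ y ∈ Ioc (0 : ℝ) 1, ‖kernelProfile (y / x)‖ ≤ 4 / x := fun y hy => by
    have hs : 0 ≤ y / x := div_nonneg hy.1.le hx.le
    rw [Real.norm_eq_abs, abs_of_nonneg (kernelProfile_nonneg hs)]
    calc kernelProfile (y / x) ≤ 4 * (y / x) := kernelProfile_le hs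
      _ ≤ 4 / x := by rw [mul_div_assoc']; gcongr; linarith [hy.2]
  simpa [Real.volume_real_Ioc_of_le zero_le_one] using
    norm_setIntegral_le_of_norm_le_const (μ := volume) measure_Ioc_lt_top hle

theorem abs_sqrt_pi_mul_sq_mul_vheat_sub_log_le {t x : ℝ} (hx : 1 ≤ x) (ht : 4 * t = x ^ 2) :
    |√π * x ^ 2 * vheat t x - 4 * exp (-1) * log x| ≤ 10 := by
  have hx₀ : 0 < x := one_pos.trans_le hx
  set A := ∫ y in Ioc 0 1, kernelProfile (y / x)
  set J := ∫ s in Ioi x⁻¹, kernelProfile s / s ^ 2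
  have hnear : |A| ≤ 4 / x := abs_integral_kernelProfile_div_le hx₀
  have hfar := abs_integral_Ioi_div_sq_add_mul_log_le continuous_kernelProfile
    (fun s hs => abs_kernelProfile_sub_le hs.1.le hs.2) (fun s _ => abs_kernelProfile_le_one s)
    (inv_pos.2 hx₀) (inv_le_one_of_one_le₀ hx)
  rw [log_inv] at hfar
  have hxA : |x * A| ≤ 4 := by
    rw [abs_mul, abs_of_pos hx₀]
    calc _ ≤ x * (4 / x) := by gcongr
      _ = 4 := by field_simp
  have heq : √π * x ^ 2 * ((√π * x)⁻¹ * (A + x⁻¹ * J)) - 4 * exp (-1) * log x =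
      x * A + (J + 4 * exp (-1) * -log x) := by
    field_simp; ring
  rw [vheat_eq hx₀ ht, heq]
  exact (abs_add_le _ _).trans (by linarith)

theorem tendsto_div_of_abs_sub_mul_le {α : Type*} {l : Filter α} {F g : α → ℝ} {L B : ℝ}
    (hg : Tendsto g l atTop) (h : ∀ᶠ a in l, |F a - L * g a| ≤ B) :
    Tendsto (fun a => F a / g a) l (nhds L) := by
  have hpos := hg.eventually_gt_atTop 0
  have hrel : Tendsto (fun a => (F a - L * g a) / g a) l (nhds 0) := by
    refine squeeze_zero_norm' (a := fun a => B / g a) ?_ (tendsto_const_nhds.div_atTop hg)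
    filter_upwards [h, hpos] with a hB hga
    rw [norm_div, Real.norm_eq_abs, Real.norm_eq_abs, abs_of_pos hga]
    exact div_le_div_of_nonneg_right hB hga.le
  refine (zero_add L ▸ hrel.add_const L).congr' ?_
  filter_upwards [hpos] with a ha
  field_simp
  ring

/-- Equation (5.3): `v(t, 2√t) ∼ (e⁻¹/√π) (ln t)/(2t)` as `t → +∞`. -/
theorem vheat_asymptotics :
    Filter.Tendsto (fun t => vheat t (2 * Real.sqrt t) / (Real.log t / (2 * t)))
      Filter.atTop (nhds (Real.exp (-1) / Real.sqrt Real.pi)) := by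
  have hbound : ∀ᶠ t in atTop, |√π * (2 * √t) ^ 2 * vheat t (2 * √t) - 2 * exp (-1) * log t|
      ≤ 10 + 4 * exp (-1) * log 2 := by
    filter_upwards [eventually_ge_atTop 1] with t ht
    have hx : 1 ≤ 2 * √t := by linarith [one_le_sqrt.2 ht]
    have h4t : 4 * t = (2 * √t) ^ 2 := by rw [mul_pow, sq_sqrt (by linarith)]; norm_num
    have hlog : log (2 * √t) = log 2 + log t / 2 := by
      rw [log_mul two_ne_zero (by positivity), log_sqrt (by linarith)]
    have key := abs_sqrt_pi_mul_sq_mul_vheat_sub_log_le hx h4t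
    rw [hlog] at key
    calc _ = |(√π * (2 * √t) ^ 2 * vheat t (2 * √t) - 4 * exp (-1) * (log 2 + log t / 2)) +
          4 * exp (-1) * log 2| := by ring_nf
      _ ≤ _ := (abs_add_le _ _).trans (by
        rw [abs_of_nonneg (mul_nonneg (by positivity) (log_nonneg one_le_two))]; linarith)
  have hlim := (tendsto_div_of_abs_sub_mul_le tendsto_log_atTop hbound).div_const (2 * √π)
  rw [show exp (-1) / √π = 2 * exp (-1) / (2 * √π) by field_simp]
  refine hlim.congr' ?_
  filter_upwards [eventually_gt_atTop 0] with t ht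
  rw [mul_pow, sq_sqrt ht.le]
  field_simp
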